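/- Fix an integer ℓ ≥ 1, an integer r with −1 ≤ r ≤ 2ℓ−2, and a ∈ (0, 1/2). For m ∈ ℕ set n = 2ℓm + r, and define A_n(x) = Σ_{j=0}^{m−1} Σ_{k=0}^{ℓ−1} ( cos((ℓj+k)x) + cos((n−ℓ+1−ℓj+k)x) )² + Σ_{j=ℓm}^{ℓm+r} cos²(jx), and E_ℓ(n) = [0, π/2] \ ⋃_{i=0}^{⌊ℓ/2⌋} [iπ/ℓ − n^{−a}, iπ/ℓ + n^{−a}]. Then there exist C > 0 and N ∈ ℕ such that for all m with n = 2ℓm + r ≥ N and all x ∈ E_ℓ(n), | A_n(x) − n(1 + u_ℓ(x) cos(nx))/2 | ≤ C n^{a}. -/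

import Mathlib

open Real

/-- `u_ℓ(s) = sin(ℓ s) / (ℓ sin s)`. -/
noncomputable def uFun (ℓ : ℕ) (s : ℝ) : ℝ := Real.sin (ℓ * s) / (ℓ * Real.sin s)

/-- `E_ℓ(n) = [0, π/2] \ ⋃_{i=0}^{⌊ℓ/2⌋} [iπ/ℓ − n^{−a}, iπ/ℓ + n^{−a}]`. -/
noncomputable def ESet (ℓ : ℕ) (a : ℝ) (n : ℕ) : Set ℝ :=
  Set.Icc (0:ℝ) (π / 2) \
    ⋃ i ∈ Finset.range (ℓ / 2 + 1),
      Set.Icc ((i : ℝ) * π / ℓ - (n : ℝ) ^ (-a)) ((i : ℝ) * π / ℓ + (n : ℝ) ^ (-a))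

namespace AAsymAux

open Finset

lemma exp_two_mul_I_sub_one (θ : ℝ) :
    Complex.exp ((2*θ : ℝ) * Complex.I) - 1
      = Complex.exp ((θ:ℝ) * Complex.I) * (2 * Complex.I * (Real.sin θ : ℂ)) := by
  rw [Complex.exp_mul_I, Complex.exp_mul_I]
  push_cast
  rw [Complex.cos_two_mul, Complex.sin_two_mul, ← Complex.ofReal_sin]
  push_cast
  linear_combination 2 * (Complex.sin_sq_add_cos_sq (θ:ℂ))
    + (-2*(Complex.sin (θ:ℂ))^2) * Complex.I_sq

lemma exp_ne_one (x : ℝ) (hx : Real.sin x ≠ 0) :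
    Complex.exp ((2*x : ℝ) * Complex.I) ≠ 1 := by
  intro h
  have h0 : (0:ℂ) = Complex.exp ((x:ℝ)*Complex.I) * (2*Complex.I*(Real.sin x:ℂ)) := by
    rw [← exp_two_mul_I_sub_one, h, sub_self]
  have h1 : (2*Complex.I*(Real.sin x:ℂ)) = 0 := by
    rcases mul_eq_zero.mp h0.symm with h2 | h2
    · exact absurd h2 (Complex.exp_ne_zero _)
    · exact h2
  have h3 : (Real.sin x : ℂ) = 0 := by
    rcases mul_eq_zero.mp h1 with h2 | h2
    · exfalso
      rcases mul_eq_zero.mp h2 with h4 | h4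
      · norm_num at h4
      · exact Complex.I_ne_zero h4
    · exact h2
  exact hx (by exact_mod_cast h3)

lemma sum_exp_eq (x : ℝ) (hx : Real.sin x ≠ 0) (L : ℕ) :
    ∑ k ∈ range L, Complex.exp ((2*x*k : ℝ) * Complex.I)
      = Complex.exp ((((L:ℝ)-1)*x : ℝ) * Complex.I) * ((Real.sin (L*x) / Real.sin x : ℝ) : ℂ) := by
  have hterm : ∀ k : ℕ, Complex.exp ((2*x*k : ℝ) * Complex.I)
      = Complex.exp ((2*x : ℝ) * Complex.I) ^ k := by
    intro k
    rw [← Complex.exp_nat_mul]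
    congr 1
    push_cast; ring
  simp only [hterm]
  rw [geom_sum_eq (exp_ne_one x hx) L]
  have hnum : Complex.exp ((2*x : ℝ) * Complex.I) ^ L - 1
      = Complex.exp ((L*x : ℝ) * Complex.I) * (2 * Complex.I * (Real.sin (L*x) : ℂ)) := by
    rw [← exp_two_mul_I_sub_one (L*x)]
    congr 2
    rw [← Complex.exp_nat_mul]
    congr 1
    push_cast; ring
  rw [hnum, exp_two_mul_I_sub_one x]
  have hx' : Complex.sin (x:ℂ) ≠ 0 := by
    rw [← Complex.ofReal_sin]
    exact_mod_cast hx
  have hexp : Complex.exp ((((L:ℝ)-1)*(x:ℂ)) * Complex.I) * Complex.exp ((x:ℂ) * Complex.I)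
      = Complex.exp (((L:ℝ)*(x:ℂ)) * Complex.I) := by
    rw [← Complex.exp_add]; ring_nf
  have hexpne := Complex.exp_ne_zero ((x:ℂ) * Complex.I)
  push_cast at hexp ⊢
  field_simp
  linear_combination (norm := ring_nf) (-Complex.sin ((L:ℂ)*(x:ℂ))) * hexp

lemma sum_cos_eq (c x : ℝ) (hx : Real.sin x ≠ 0) (L : ℕ) :
    ∑ k ∈ range L, Real.cos (c + 2*x*k)
      = Real.cos (c + ((L:ℝ)-1)*x) * (Real.sin ((L:ℝ)*x) / Real.sin x) := by
  have hterm : ∀ k : ℕ, Real.cos (c + 2*x*k)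
      = (Complex.exp ((c:ℝ) * Complex.I) * Complex.exp ((2*x*k : ℝ) * Complex.I)).re := by
    intro k
    rw [← Complex.exp_add]
    have : (c:ℂ) * Complex.I + (2*x*k : ℝ) * Complex.I = ((c + 2*x*k : ℝ) : ℂ) * Complex.I := by
      push_cast; ring
    rw [this, Complex.exp_ofReal_mul_I_re]
  simp only [hterm]
  rw [← Complex.re_sum, ← Finset.mul_sum, sum_exp_eq x hx L, ← mul_assoc, ← Complex.exp_add]
  have : (c:ℂ) * Complex.I + ((((L:ℝ)-1)*x : ℝ) : ℂ) * Complex.I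
      = ((c + ((L:ℝ)-1)*x : ℝ) : ℂ) * Complex.I := by push_cast; ring
  rw [this, Complex.mul_re, Complex.exp_ofReal_mul_I_re, Complex.ofReal_re, Complex.ofReal_im,
    mul_zero, sub_zero]

lemma abs_sum_cos_le (c x : ℝ) (hx : Real.sin x ≠ 0) (m : ℕ) :
    |∑ j ∈ range m, Real.cos (c + 2*x*j)| ≤ 1 / |Real.sin x| := by
  have hterm : ∀ k : ℕ, Real.cos (c + 2*x*k)
      = (Complex.exp ((c:ℝ) * Complex.I) * Complex.exp ((2*x : ℝ) * Complex.I) ^ k).re := by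
    intro k
    rw [← Complex.exp_nat_mul, ← Complex.exp_add]
    have : (c:ℂ) * Complex.I + (k:ℕ) * (((2*x : ℝ):ℂ) * Complex.I)
        = ((c + 2*x*k : ℝ) : ℂ) * Complex.I := by push_cast; ring
    rw [this, Complex.exp_ofReal_mul_I_re]
  simp only [hterm]
  rw [← Complex.re_sum, ← Finset.mul_sum]
  refine le_trans (Complex.abs_re_le_norm _) ?_
  rw [norm_mul, Complex.norm_exp_ofReal_mul_I, one_mul]
  rw [geom_sum_eq (exp_ne_one x hx) m, norm_div]
  have hden : ‖Complex.exp ((2*x:ℝ) * Complex.I) - 1‖ = 2 * |Real.sin x| := by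
    rw [exp_two_mul_I_sub_one, norm_mul, norm_mul, norm_mul, Complex.norm_exp_ofReal_mul_I,
      Complex.norm_I, Complex.norm_real, Complex.norm_two, Real.norm_eq_abs]
    ring
  rw [hden]
  have hnum : ‖Complex.exp ((2*x:ℝ) * Complex.I) ^ m - 1‖ ≤ 2 := by
    refine le_trans (norm_sub_le _ _) ?_
    rw [norm_pow, Complex.norm_exp_ofReal_mul_I, one_pow, norm_one]
    norm_num
  have hs : 0 < |Real.sin x| := abs_pos.mpr hx
  rw [div_le_div_iff₀ (by positivity) (by positivity)]
  nlinarith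

lemma sum_block (f : ℕ → ℝ) (L m : ℕ) :
    ∑ j ∈ range m, ∑ k ∈ range L, f (L*j + k) = ∑ t ∈ range (L*m), f t := by
  induction m with
  | zero => simp
  | succ m ih =>
      rw [Finset.sum_range_succ, ih, Nat.mul_succ, Finset.sum_range_add]


lemma sin_lb {y δ : ℝ} {k : ℤ} (hδ : 0 ≤ δ) (h1 : δ ≤ |y - k*π|) (h2 : |y - k*π| ≤ π/2) :
    2/π * δ ≤ |Real.sin y| := by
  have hpi : π/2 ≤ π := by linarith [Real.pi_pos]
  have hy : Real.sin y = (-1)^k * Real.sin (y - k*π) := by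
    rw [← Real.sin_add_int_mul_pi (y - k*π) k]; ring_nf
  have habs : |Real.sin y| = |Real.sin (y - k*π)| := by
    rw [hy, abs_mul]
    rcases Int.even_or_odd k with he | ho
    · rw [he.neg_one_zpow]; simp
    · rw [Odd.neg_one_zpow ho]; simp
  set u := y - k*π with hu
  have h3 : |Real.sin u| = Real.sin |u| := by
    rcases le_or_gt 0 u with h | h
    · have hup : u ≤ π := (le_abs_self u).trans (h2.trans hpi)
      rw [abs_of_nonneg h, abs_of_nonneg (Real.sin_nonneg_of_nonneg_of_le_pi h hup)]
    · have h1' : -u ≤ π := (neg_le_abs u).trans (h2.trans hpi)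
      have hs : 0 ≤ Real.sin (-u) := Real.sin_nonneg_of_nonneg_of_le_pi (by linarith) h1'
      rw [Real.sin_neg] at hs
      rw [abs_of_neg h, Real.sin_neg, abs_of_nonpos (by linarith : Real.sin u ≤ 0)]
  rw [habs, h3]
  calc 2/π * δ ≤ 2/π * |u| := by
        apply mul_le_mul_of_nonneg_left h1 (by positivity)
    _ ≤ Real.sin |u| := Real.mul_le_sin (abs_nonneg u) h2

end AAsymAux

open AAsymAux Finset

set_option maxHeartbeats 2000000

/-- With `n = 2ℓm + r`, on `E_ℓ(n)` the quantity
`A_n(x) = Σ_{j<m} Σ_{k<ℓ} (cos((ℓj+k)x) + cos((n−ℓ+1−ℓj+k)x))² + Σ_{i≤r} cos²((ℓm+i)x)`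
equals `n(1 + u_ℓ(x) cos(nx))/2 + O(n^a)`. -/
theorem A_asymptotics (ℓ : ℕ) (hℓ : 1 ≤ ℓ) (r : ℤ) (hr1 : -1 ≤ r) (hr2 : r ≤ 2 * ℓ - 2)
    (a : ℝ) (ha : a ∈ Set.Ioo (0:ℝ) (1/2)) :
    ∃ C > 0, ∃ N : ℕ, ∀ m n : ℕ, (n : ℤ) = 2 * ℓ * m + r → N ≤ n →
      ∀ x ∈ ESet ℓ a n,
      |(∑ j ∈ Finset.range m, ∑ k ∈ Finset.range ℓ,
            (Real.cos (((ℓ * j + k : ℕ) : ℝ) * x)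
              + Real.cos (((n - ℓ + 1 - ℓ * j + k : ℕ) : ℝ) * x)) ^ 2
          + ∑ i ∈ Finset.range (r + 1).toNat, Real.cos (((ℓ * m + i : ℕ) : ℝ) * x) ^ 2)
        - (n : ℝ) * (1 + uFun ℓ x * Real.cos (n * x)) / 2|
      ≤ C * (n : ℝ) ^ a := by
  obtain ⟨ha0, ha2⟩ := ha
  have hπ := Real.pi_pos
  refine ⟨((ℓ:ℝ)+2)*π + 1, by positivity, 1, ?_⟩
  intro m n hn hN x hx
  simp only [ESet, Set.mem_diff, Set.mem_Icc] at hx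
  obtain ⟨⟨hx0, hx2⟩, hxE⟩ := hx
  have hn0R : (1:ℝ) ≤ (n:ℝ) := by exact_mod_cast hN
  have hδpos : 0 < (n:ℝ)^(-a) := Real.rpow_pos_of_pos (by linarith) _
  have hδ1 : (n:ℝ)^(-a) ≤ 1 := Real.rpow_le_one_of_one_le_of_nonpos hn0R (by linarith)
  have hℓ0 : (ℓ:ℝ) ≠ 0 := by positivity
  have hℓ1 : (1:ℝ) ≤ (ℓ:ℝ) := by exact_mod_cast hℓ
  -- s
  set s : ℕ := (r+1).toNat with hsdef
  have hsZ : (s:ℤ) = r + 1 := Int.toNat_of_nonneg (by linarith)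
  have hn1 : n + 1 = 2*ℓ*m + s := by
    have h : ((n:ℤ)) + 1 = 2*(ℓ:ℤ)*(m:ℤ) + (s:ℤ) := by rw [hn, hsZ]; ring
    exact_mod_cast h
  have hnR : (n:ℝ) + 1 = 2*(ℓ:ℝ)*m + s := by exact_mod_cast hn1
  have hsleR : (s:ℝ) ≤ 2*(ℓ:ℝ) - 1 := by
    have h : (s:ℤ) ≤ 2*(ℓ:ℤ) - 1 := by rw [hsZ]; linarith
    exact_mod_cast h
  -- separation
  have hsep : ∀ i : ℕ, i ≤ ℓ/2 → (n:ℝ)^(-a) < |x - i*π/ℓ| := by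
    intro i hi
    have hmem : x ∉ Set.Icc ((i:ℝ)*π/ℓ - (n:ℝ)^(-a)) ((i:ℝ)*π/ℓ + (n:ℝ)^(-a)) := by
      intro hmem
      exact hxE (Set.mem_iUnion₂.mpr ⟨i, Finset.mem_range.mpr (by omega), hmem⟩)
    rw [Set.mem_Icc, not_and_or, not_le, not_le] at hmem
    rcases hmem with h | h
    · rw [abs_sub_comm, lt_abs]; left; linarith
    · rw [lt_abs]; left; linarith
  have hxlow : (n:ℝ)^(-a) < x := by
    have h := hsep 0 (Nat.zero_le _)
    rw [Nat.cast_zero, zero_mul, zero_div, sub_zero, abs_of_nonneg hx0] at h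
    exact h
  have hsinx : 2/π * (n:ℝ)^(-a) ≤ |Real.sin x| := by
    have h1 : 0 ≤ Real.sin x :=
      Real.sin_nonneg_of_nonneg_of_le_pi hx0 (by linarith)
    calc 2/π * (n:ℝ)^(-a) ≤ 2/π * x := by
          apply mul_le_mul_of_nonneg_left hxlow.le (by positivity)
      _ ≤ Real.sin x := Real.mul_le_sin hx0 hx2
      _ = |Real.sin x| := (abs_of_nonneg h1).symm
  have hsinlx : 2/π * (n:ℝ)^(-a) ≤ |Real.sin ((ℓ:ℝ)*x)| := by
    set y := (ℓ:ℝ)*x with hy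
    set k : ℤ := round (y/π) with hk
    have hy0 : 0 ≤ y := by positivity
    have hk0 : 0 ≤ k := by
      rw [hk, round_eq]
      apply Int.floor_nonneg.mpr
      have : 0 ≤ y/π := by positivity
      linarith
    have h2 : |y - k*π| ≤ π/2 := by
      have h := abs_sub_round (y/π)
      have hππ : y - k*π = (y/π - k)*π := by field_simp
      rw [hππ, abs_mul, abs_of_pos hπ]
      calc |y/π - k| * π ≤ (1/2)*π := mul_le_mul_of_nonneg_right h hπ.le
        _ = π/2 := by ring
    have h1 : (n:ℝ)^(-a) ≤ |y - k*π| := by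
      by_cases hcase : k.toNat ≤ ℓ/2
      · have hkk : (k:ℝ) = (k.toNat : ℝ) := by exact_mod_cast (Int.toNat_of_nonneg hk0).symm
        have hsepk := hsep k.toNat hcase
        have heq : y - k*π = (ℓ:ℝ)*(x - (k.toNat:ℝ)*π/ℓ) := by
          rw [hkk, hy]; field_simp
        rw [heq, abs_mul, abs_of_nonneg (by positivity : (0:ℝ) ≤ (ℓ:ℝ))]
        calc (n:ℝ)^(-a) = 1*(n:ℝ)^(-a) := (one_mul _).symm
          _ ≤ (ℓ:ℝ)*|x - (k.toNat:ℝ)*π/ℓ| := by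
              apply mul_le_mul hℓ1 hsepk.le hδpos.le (by linarith)
      · have hk2 : ((ℓ/2 : ℕ):ℤ) + 1 ≤ k := by omega
        have hk2R : ((ℓ/2 : ℕ):ℝ) + 1 ≤ (k:ℝ) := by
          have hk2' : ((ℓ/2+1 : ℕ):ℤ) ≤ k := by push_cast; omega
          have h'' : (((ℓ/2+1 : ℕ):ℤ):ℝ) ≤ ((k:ℤ):ℝ) := Int.cast_le.mpr hk2'
          rw [Int.cast_natCast, Nat.cast_add, Nat.cast_one] at h''
          exact h''
        have hq : ((ℓ:ℝ)-1)/2 ≤ ((ℓ/2:ℕ):ℝ) := by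
          have h : ℓ ≤ 2*(ℓ/2)+1 := by omega
          have h' : (ℓ:ℝ) ≤ 2*((ℓ/2:ℕ):ℝ)+1 := by exact_mod_cast h
          linarith
        have t1 : ((ℓ:ℝ)+1)/2 * π ≤ (k:ℝ)*π :=
          mul_le_mul_of_nonneg_right (by linarith) hπ.le
        have t2 : y ≤ (ℓ:ℝ)*(π/2) := by
          rw [hy]; exact mul_le_mul_of_nonneg_left hx2 (by positivity)
        have t3 : ((ℓ:ℝ)+1)/2*π - (ℓ:ℝ)*(π/2) = π/2 := by ring
        have hhalf : π/2 ≤ (k:ℝ)*π - y := by linarith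
        have hπ3 := Real.pi_gt_three
        calc (n:ℝ)^(-a) ≤ 1 := hδ1
          _ ≤ (k:ℝ)*π - y := by linarith
          _ = -(y - k*π) := by ring
          _ ≤ |y - k*π| := neg_le_abs _
    exact sin_lb hδpos.le h1 h2
  have hsinx0 : Real.sin x ≠ 0 :=
    abs_pos.mp (lt_of_lt_of_le (by positivity) hsinx)
  have hsinlx0 : Real.sin ((ℓ:ℝ)*x) ≠ 0 :=
    abs_pos.mp (lt_of_lt_of_le (by positivity) hsinlx)
  have hna0 : (0:ℝ) < (n:ℝ)^a := Real.rpow_pos_of_pos (by linarith) _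
  have hbound : ∀ z : ℝ, 2/π * (n:ℝ)^(-a) ≤ |z| → 1/|z| ≤ π/2*(n:ℝ)^a := by
    intro z hz
    have h0 : 0 < 2/π * (n:ℝ)^(-a) := by positivity
    have hδinv : (n:ℝ)^(-a) = ((n:ℝ)^a)⁻¹ := Real.rpow_neg (by linarith) a
    calc 1/|z| ≤ 1/(2/π * (n:ℝ)^(-a)) := one_div_le_one_div_of_le h0 hz
      _ = π/2*(n:ℝ)^a := by
          rw [hδinv]; field_simp
  -- index identity
  have hidx : ∀ j, j < m → ∀ k : ℕ, n - ℓ + 1 - ℓ*j + k = ℓ*(2*m-1-j) + s + k := by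
    intro j hj k
    have hq1 : j + (2*m-1-j) + 1 = 2*m := by omega
    have h1 : n + 1 = ℓ*j + ℓ*(2*m-1-j) + ℓ + s := by
      rw [hn1]
      have h2 : 2*ℓ*m = ℓ*(j + (2*m-1-j) + 1) := by rw [hq1]; ring
      rw [h2]; ring
    have h2 : 1 ≤ ℓ*(2*m-1-j) := Nat.one_le_iff_ne_zero.mpr
      (Nat.mul_ne_zero (by omega) (by omega))
    generalize hA : ℓ*j = A at h1 ⊢
    generalize hB : ℓ*(2*m-1-j) = B at h1 h2 ⊢
    omega
  -- main identity
  have key : (∑ j ∈ Finset.range m, ∑ k ∈ Finset.range ℓ,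
        (Real.cos (((ℓ * j + k : ℕ) : ℝ) * x)
          + Real.cos (((n - ℓ + 1 - ℓ * j + k : ℕ) : ℝ) * x)) ^ 2
      + ∑ i ∈ Finset.range s, Real.cos (((ℓ * m + i : ℕ) : ℝ) * x) ^ 2)
      = ((n:ℝ)+1)/2
        + (∑ t ∈ range (n+1), Real.cos (0 + 2*x*t))/2
        + (m:ℝ)*(Real.cos ((n:ℝ)*x) * (Real.sin ((ℓ:ℝ)*x) / Real.sin x))
        + (ℓ:ℝ)*(∑ j ∈ range m, Real.cos (((ℓ:ℝ)-1-(n:ℝ))*x + 2*((ℓ:ℝ)*x)*j)) := by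
    have step1 : ∑ j ∈ Finset.range m, ∑ k ∈ Finset.range ℓ,
          (Real.cos (((ℓ * j + k : ℕ) : ℝ) * x)
            + Real.cos (((n - ℓ + 1 - ℓ * j + k : ℕ) : ℝ) * x)) ^ 2
        = ∑ j ∈ Finset.range m, ∑ k ∈ Finset.range ℓ,
          (Real.cos (((ℓ * j + k : ℕ) : ℝ) * x) ^ 2
            + Real.cos (((ℓ*(2*m-1-j) + s + k : ℕ) : ℝ) * x) ^ 2
            + (Real.cos (((n:ℝ)-(ℓ:ℝ)+1)*x + 2*x*k)
               + Real.cos (((ℓ:ℝ)-1-(n:ℝ))*x + 2*((ℓ:ℝ)*x)*j))) := by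
      refine Finset.sum_congr rfl fun j hj => Finset.sum_congr rfl fun k hk => ?_
      rw [Finset.mem_range] at hj
      rw [hidx j hj k]
      have hq : ((2*m-1-j : ℕ):ℝ) = 2*(m:ℝ)-1-(j:ℝ) := by
        have h : (2*m-1-j) + (j+1) = 2*m := by omega
        have h' := congrArg (Nat.cast : ℕ → ℝ) h
        push_cast at h'
        linarith
      have trig : ∀ A B : ℝ, (Real.cos A + Real.cos B)^2
          = Real.cos A^2 + Real.cos B^2 + (Real.cos (A+B) + Real.cos (A-B)) := by
        intro A B
        have h1 : Real.cos (A+B) + Real.cos (A-B) = 2*Real.cos A*Real.cos B := by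
          rw [Real.cos_add, Real.cos_sub]; ring
        rw [h1]; ring
      rw [trig]
      congr 2
      · congr 1
        push_cast [hq]
        linear_combination (-x) * hnR
      · congr 1
        push_cast [hq]
        linear_combination x * hnR
    rw [step1]
    simp only [Finset.sum_add_distrib]
    have hS1 := sum_block (fun t => Real.cos ((t:ℝ)*x)^2) ℓ m
    have hS2 : ∑ j ∈ range m, ∑ k ∈ range ℓ,
          Real.cos (((ℓ*(2*m-1-j) + s + k : ℕ) : ℝ) * x) ^ 2
        = ∑ t ∈ range (ℓ*m), Real.cos (((ℓ*m + s + t : ℕ):ℝ)*x)^2 := by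
      rw [← Finset.sum_range_reflect]
      rw [← sum_block (fun t => Real.cos (((ℓ*m + s + t : ℕ):ℝ)*x)^2) ℓ m]
      refine Finset.sum_congr rfl fun j hj => Finset.sum_congr rfl fun k hk => ?_
      rw [Finset.mem_range] at hj
      have h1 : 2*m-1-(m-1-j) = m+j := by omega
      have h2 : ℓ*(m+j) + s + k = ℓ*m + s + (ℓ*j+k) := by ring
      rw [h1, h2]
    have hS3 : (∑ t ∈ range (ℓ*m), Real.cos ((t:ℝ)*x)^2)
          + (∑ i ∈ Finset.range s, Real.cos (((ℓ * m + i : ℕ) : ℝ) * x) ^ 2)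
          + (∑ t ∈ range (ℓ*m), Real.cos (((ℓ*m + s + t : ℕ):ℝ)*x)^2)
        = ∑ t ∈ range (n+1), Real.cos ((t:ℝ)*x)^2 := by
      have e1 : ∑ t ∈ range (ℓ*m+s), Real.cos ((t:ℝ)*x)^2
          = (∑ t ∈ range (ℓ*m), Real.cos ((t:ℝ)*x)^2)
            + ∑ i ∈ range s, Real.cos (((ℓ*m + i : ℕ):ℝ)*x)^2 :=
        Finset.sum_range_add (fun t => Real.cos ((t:ℝ)*x)^2) (ℓ*m) s
      have e2 : ∑ t ∈ range (ℓ*m+s+(ℓ*m)), Real.cos ((t:ℝ)*x)^2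
          = (∑ t ∈ range (ℓ*m+s), Real.cos ((t:ℝ)*x)^2)
            + ∑ t ∈ range (ℓ*m), Real.cos (((ℓ*m+s + t : ℕ):ℝ)*x)^2 :=
        Finset.sum_range_add (fun t => Real.cos ((t:ℝ)*x)^2) (ℓ*m+s) (ℓ*m)
      have e3 : ℓ*m+s+(ℓ*m) = n+1 := by
        have h2 : 2*ℓ*m = ℓ*m + ℓ*m := by ring
        rw [h2] at hn1
        omega
      rw [← e1, ← e2, e3]
    have hSXa : ∑ j ∈ range m, ∑ k ∈ range ℓ,
          Real.cos (((n:ℝ)-(ℓ:ℝ)+1)*x + 2*x*k)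
        = (m:ℝ)*(Real.cos ((n:ℝ)*x) * (Real.sin ((ℓ:ℝ)*x) / Real.sin x)) := by
      rw [Finset.sum_const, Finset.card_range, nsmul_eq_mul]
      congr 1
      rw [sum_cos_eq _ x hsinx0 ℓ]
      congr 2
      ring
    have hSXb : ∑ j ∈ range m, ∑ k ∈ range ℓ,
          Real.cos (((ℓ:ℝ)-1-(n:ℝ))*x + 2*((ℓ:ℝ)*x)*j)
        = (ℓ:ℝ)*(∑ j ∈ range m, Real.cos (((ℓ:ℝ)-1-(n:ℝ))*x + 2*((ℓ:ℝ)*x)*j)) := by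
      simp only [Finset.sum_const, Finset.card_range, nsmul_eq_mul]
      rw [← Finset.mul_sum]
    have hsq : ∑ t ∈ range (n+1), Real.cos ((t:ℝ)*x)^2
        = ((n:ℝ)+1)/2 + (∑ t ∈ range (n+1), Real.cos (0 + 2*x*t))/2 := by
      have hterm : ∀ t:ℕ, Real.cos ((t:ℝ)*x)^2 = 1/2 + Real.cos (0 + 2*x*t)/2 := by
        intro t
        rw [Real.cos_sq]
        congr 2
        ring
      simp only [hterm]
      rw [Finset.sum_add_distrib, Finset.sum_const, Finset.card_range, ← Finset.sum_div]
      push_cast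
      ring
    rw [hS1, hS2, hSXa, hSXb]
    calc (∑ t ∈ range (ℓ*m), Real.cos ((t:ℝ)*x)^2)
          + (∑ t ∈ range (ℓ*m), Real.cos (((ℓ*m + s + t : ℕ):ℝ)*x)^2)
          + ((m:ℝ)*(Real.cos ((n:ℝ)*x) * (Real.sin ((ℓ:ℝ)*x) / Real.sin x))
             + (ℓ:ℝ)*(∑ j ∈ range m, Real.cos (((ℓ:ℝ)-1-(n:ℝ))*x + 2*((ℓ:ℝ)*x)*j)))
          + (∑ i ∈ Finset.range s, Real.cos (((ℓ * m + i : ℕ) : ℝ) * x) ^ 2)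
        = (∑ t ∈ range (n+1), Real.cos ((t:ℝ)*x)^2)
          + ((m:ℝ)*(Real.cos ((n:ℝ)*x) * (Real.sin ((ℓ:ℝ)*x) / Real.sin x))
             + (ℓ:ℝ)*(∑ j ∈ range m, Real.cos (((ℓ:ℝ)-1-(n:ℝ))*x + 2*((ℓ:ℝ)*x)*j))) := by
          rw [← hS3]; ring
      _ = _ := by rw [hsq]; ring
  -- error form
  rw [key]
  have hm2 : 2*(ℓ:ℝ)*m = (n:ℝ)+1-(s:ℝ) := by linarith
  have herr : ((n:ℝ)+1)/2
        + (∑ t ∈ range (n+1), Real.cos (0 + 2*x*t))/2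
        + (m:ℝ)*(Real.cos ((n:ℝ)*x) * (Real.sin ((ℓ:ℝ)*x) / Real.sin x))
        + (ℓ:ℝ)*(∑ j ∈ range m, Real.cos (((ℓ:ℝ)-1-(n:ℝ))*x + 2*((ℓ:ℝ)*x)*j))
        - (n : ℝ) * (1 + uFun ℓ x * Real.cos (n * x)) / 2
      = 1/2 + (∑ t ∈ range (n+1), Real.cos (0 + 2*x*t))/2
        + (Real.sin ((ℓ:ℝ)*x) / Real.sin x) * Real.cos ((n:ℝ)*x) * ((1-(s:ℝ))/(2*(ℓ:ℝ)))
        + (ℓ:ℝ)*(∑ j ∈ range m, Real.cos (((ℓ:ℝ)-1-(n:ℝ))*x + 2*((ℓ:ℝ)*x)*j)) := by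
    have hu : uFun ℓ x = (Real.sin ((ℓ:ℝ)*x) / Real.sin x) / (ℓ:ℝ) := by
      simp only [uFun]
      rw [div_div]
      ring_nf
    have hm3 : (m:ℝ) = ((n:ℝ)+1-(s:ℝ))/(2*(ℓ:ℝ)) := by
      rw [eq_div_iff (by positivity : (2*(ℓ:ℝ)) ≠ 0)]
      linarith
    rw [hu, hm3]
    ring
  rw [herr]
  -- estimates
  have hDb : |∑ t ∈ range (n+1), Real.cos (0 + 2*x*t)| ≤ π/2*(n:ℝ)^a :=
    (abs_sum_cos_le 0 x hsinx0 (n+1)).trans (hbound _ hsinx)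
  have hWb : |∑ j ∈ range m, Real.cos (((ℓ:ℝ)-1-(n:ℝ))*x + 2*((ℓ:ℝ)*x)*j)|
      ≤ π/2*(n:ℝ)^a :=
    (abs_sum_cos_le _ ((ℓ:ℝ)*x) hsinlx0 m).trans (hbound _ hsinlx)
  have hρb : |Real.sin ((ℓ:ℝ)*x) / Real.sin x| ≤ π/2*(n:ℝ)^a := by
    rw [abs_div]
    have hsin1 : |Real.sin ((ℓ:ℝ)*x)| ≤ 1 :=
      abs_le.mpr ⟨Real.neg_one_le_sin _, Real.sin_le_one _⟩
    calc |Real.sin ((ℓ:ℝ)*x)| / |Real.sin x| ≤ 1 / |Real.sin x| :=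
          (div_le_div_iff_of_pos_right (abs_pos.mpr hsinx0)).mpr hsin1
      _ ≤ π/2*(n:ℝ)^a := hbound _ hsinx
  have hcb : |Real.cos ((n:ℝ)*x)| ≤ 1 := Real.abs_cos_le_one _
  have hna1 : (1:ℝ) ≤ (n:ℝ)^a := by
    calc (1:ℝ) = (n:ℝ)^(0:ℝ) := (Real.rpow_zero _).symm
      _ ≤ (n:ℝ)^a := Real.rpow_le_rpow_of_exponent_le hn0R ha0.le
  have hT3 : |(Real.sin ((ℓ:ℝ)*x) / Real.sin x) * Real.cos ((n:ℝ)*x) * ((1-(s:ℝ))/(2*(ℓ:ℝ)))|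
      ≤ π/2*(n:ℝ)^a := by
    rw [abs_mul, abs_mul]
    have h1 : |Real.sin ((ℓ:ℝ)*x) / Real.sin x| * |Real.cos ((n:ℝ)*x)| ≤ π/2*(n:ℝ)^a := by
      calc |Real.sin ((ℓ:ℝ)*x) / Real.sin x| * |Real.cos ((n:ℝ)*x)|
          ≤ |Real.sin ((ℓ:ℝ)*x) / Real.sin x| * 1 :=
            mul_le_mul_of_nonneg_left hcb (abs_nonneg _)
        _ = |Real.sin ((ℓ:ℝ)*x) / Real.sin x| := mul_one _
        _ ≤ π/2*(n:ℝ)^a := hρb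
    have h2 : |(1-(s:ℝ))/(2*(ℓ:ℝ))| ≤ 1 := by
      rw [abs_div, abs_of_pos (by positivity : (0:ℝ) < 2*(ℓ:ℝ))]
      rw [div_le_one (by positivity)]
      rw [abs_le]
      constructor <;> linarith
    calc |Real.sin ((ℓ:ℝ)*x) / Real.sin x| * |Real.cos ((n:ℝ)*x)| * |(1-(s:ℝ))/(2*(ℓ:ℝ))|
        ≤ (π/2*(n:ℝ)^a) * 1 := mul_le_mul h1 h2 (abs_nonneg _) (by positivity)
      _ = π/2*(n:ℝ)^a := mul_one _
  set D := ∑ t ∈ range (n+1), Real.cos (0 + 2*x*t) with hD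
  set W := ∑ j ∈ range m, Real.cos (((ℓ:ℝ)-1-(n:ℝ))*x + 2*((ℓ:ℝ)*x)*j) with hW
  set T3 := (Real.sin ((ℓ:ℝ)*x) / Real.sin x) * Real.cos ((n:ℝ)*x) * ((1-(s:ℝ))/(2*(ℓ:ℝ))) with hT3d
  have habs : |1/2 + D/2 + T3 + (ℓ:ℝ)*W| ≤ 1/2 + |D|/2 + |T3| + (ℓ:ℝ)*|W| := by
    have h1 := abs_add_le (1/2 + D/2 + T3) ((ℓ:ℝ)*W)
    have h2 := abs_add_le (1/2 + D/2) T3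
    have h3 := abs_add_le (1/2 : ℝ) (D/2)
    have h4 : |D/2| = |D|/2 := by rw [abs_div]; norm_num
    have h5 : |(ℓ:ℝ)*W| = (ℓ:ℝ)*|W| := by
      rw [abs_mul, abs_of_nonneg (by positivity : (0:ℝ) ≤ (ℓ:ℝ))]
    have h6 : |(1/2 : ℝ)| = 1/2 := by norm_num
    linarith
  refine habs.trans ?_
  have hWb2 : (ℓ:ℝ)*|W| ≤ (ℓ:ℝ)*(π/2*(n:ℝ)^a) :=
    mul_le_mul_of_nonneg_left hWb (by positivity)
  have hfin : 1/2 + (π/2*(n:ℝ)^a)/2 + π/2*(n:ℝ)^a + (ℓ:ℝ)*(π/2*(n:ℝ)^a)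
      ≤ (((ℓ:ℝ)+2)*π + 1) * (n:ℝ)^a := by
    have hl0 : (0:ℝ) ≤ (ℓ:ℝ) := by positivity
    nlinarith [mul_nonneg hl0 hπ.le, mul_nonneg (mul_nonneg hl0 hπ.le) (le_of_lt hna0),
      mul_pos hπ hna0]
  linarith
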